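/- Let A₁, A₂, A₃ ∈ ℝ with A₁ + A₂ + A₃ = 0, let d₂, d₃, σ₂, σ₃ > 0, set E₂ = σ₂²/(2d₂) and E₃ = σ₃²/(2d₃), assume A₂E₃ + A₃E₂ ≠ 0, and set E₁ = −A₁E₂E₃/(A₂E₃ + A₃E₂) with E₁ > 0. Then the Gaussian function p(u₁,u₂,u₃) = exp( −½( u₁²/E₁ + u₂²/E₂ + u₃²/E₃ ) ) satisfies the stationary Fokker–Planck equation of the triad system at every point of ℝ³: ∂_{u₁}( A₁u₂u₃ · p ) + ∂_{u₂}( (A₂u₃u₁ − d₂u₂) · p ) + ∂_{u₃}( (A₃u₁u₂ − d₃u₃) · p ) = (σ₂²/2) ∂²_{u₂} p + (σ₃²/2) ∂²_{u₃} p. -/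

import Mathlib

/-!
Write `p = exp(-½ Σ uᵢ²/Eᵢ)`, so `∂ᵢ p = -(uᵢ/Eᵢ) p` and `∂ᵢ² p = ((uᵢ/Eᵢ)² - 1/Eᵢ) p`.
Dividing the Fokker–Planck equation by `p`, the damping and noise terms cancel exactly because
of the fluctuation–dissipation relations `σᵢ² = 2 dᵢ Eᵢ`, and what is left is the cubic term
`-u₁u₂u₃ (A₁/E₁ + A₂/E₂ + A₃/E₃)`, which vanishes by the choice of `E₁`.
-/

open Real

section GaussianSlice

variable {f : ℝ → ℝ} {E c : ℝ}

theorem hasDerivAt_gaussian_slice (hf : ∀ t, f t = exp (-(1 / 2) * (t ^ 2 / E + c))) (t : ℝ) :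
    HasDerivAt f (-(t / E) * f t) t := by
  obtain rfl : f = _ := funext hf
  have hq : HasDerivAt (fun s : ℝ => -(1 / 2) * (s ^ 2 / E + c)) (-(t / E)) t := by
    refine ((((hasDerivAt_pow 2 t).div_const E).add_const c).const_mul _).congr_deriv ?_
    norm_num
    ring
  simpa only [mul_comm] using hq.exp

theorem deriv_gaussian_slice (hf : ∀ t, f t = exp (-(1 / 2) * (t ^ 2 / E + c))) :
    deriv f = fun t => -(t / E) * f t :=
  funext fun t => (hasDerivAt_gaussian_slice hf t).deriv

theorem iteratedDeriv_two_gaussian_slice (hf : ∀ t, f t = exp (-(1 / 2) * (t ^ 2 / E + c)))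
    (t : ℝ) : iteratedDeriv 2 f t = ((t / E) ^ 2 - 1 / E) * f t := by
  rw [iteratedDeriv_succ, iteratedDeriv_one, deriv_gaussian_slice hf]
  have hlin : HasDerivAt (fun s : ℝ => -(s / E)) (-(1 / E)) t := ((hasDerivAt_id t).div_const E).neg
  exact (hlin.mul (hasDerivAt_gaussian_slice hf t)).deriv.trans (by ring)

theorem deriv_affine_mul_gaussian_slice (hf : ∀ t, f t = exp (-(1 / 2) * (t ^ 2 / E + c)))
    (b d t : ℝ) : deriv (fun s => (b - d * s) * f s) t = (-d - (b - d * t) * (t / E)) * f t := by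
  have hlin : HasDerivAt (fun s : ℝ => b - d * s) (-d) t := by
    simpa using ((hasDerivAt_id t).const_mul d).const_sub b
  exact (hlin.mul (hasDerivAt_gaussian_slice hf t)).deriv.trans (by ring)

end GaussianSlice

theorem triad_energy_balance {A1 A2 A3 E1 E2 E3 : ℝ}
    (hE1 : E1 = -A1 * E2 * E3 / (A2 * E3 + A3 * E2)) (hE1ne : E1 ≠ 0) :
    E2 ≠ 0 ∧ E3 ≠ 0 ∧ A1 / E1 + A2 / E2 + A3 / E3 = 0 := by
  obtain ⟨hnum, hden⟩ := div_ne_zero_iff.mp (hE1 ▸ hE1ne)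
  have hA1 : A1 ≠ 0 := by rintro rfl; simp at hnum
  have hE2 : E2 ≠ 0 := by rintro rfl; simp at hnum
  have hE3 : E3 ≠ 0 := by rintro rfl; simp at hnum
  refine ⟨hE2, hE3, ?_⟩
  rw [hE1]
  field_simp
  ring

theorem sq_eq_two_mul_mul_of_eq_sq_div {E σ d : ℝ} (hE : E = σ ^ 2 / (2 * d)) (hE0 : E ≠ 0) :
    σ ^ 2 = 2 * d * E := by
  have hd : d ≠ 0 := by rintro rfl; simp [hE] at hE0
  rw [hE]
  field_simp

theorem triad_gaussian_invariant_measure_general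
    (A1 A2 A3 d2 d3 σ2 σ3 E1 E2 E3 : ℝ)
    (hE2 : E2 = σ2 ^ 2 / (2 * d2)) (hE3 : E3 = σ3 ^ 2 / (2 * d3))
    (hE1 : E1 = -A1 * E2 * E3 / (A2 * E3 + A3 * E2)) (hE1pos : 0 < E1)
    (p : ℝ → ℝ → ℝ → ℝ)
    (hp : ∀ u1 u2 u3, p u1 u2 u3 =
      Real.exp (-(1 / 2) * (u1 ^ 2 / E1 + u2 ^ 2 / E2 + u3 ^ 2 / E3))) :
    ∀ u1 u2 u3 : ℝ,
      deriv (fun t => A1 * u2 * u3 * p t u2 u3) u1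
      + deriv (fun t => (A2 * u3 * u1 - d2 * t) * p u1 t u3) u2
      + deriv (fun t => (A3 * u1 * u2 - d3 * t) * p u1 u2 t) u3
      = σ2 ^ 2 / 2 * iteratedDeriv 2 (fun t => p u1 t u3) u2
      + σ3 ^ 2 / 2 * iteratedDeriv 2 (fun t => p u1 u2 t) u3 := by
  intro u1 u2 u3
  have hE1ne := hE1pos.ne'
  obtain ⟨hE2ne, hE3ne, hbalance⟩ := triad_energy_balance hE1 hE1ne
  have h1 : ∀ t, p t u2 u3 = exp (-(1 / 2) * (t ^ 2 / E1 + (u2 ^ 2 / E2 + u3 ^ 2 / E3))) :=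
    fun t => by rw [hp]; ring_nf
  have h2 : ∀ t, p u1 t u3 = exp (-(1 / 2) * (t ^ 2 / E2 + (u1 ^ 2 / E1 + u3 ^ 2 / E3))) :=
    fun t => by rw [hp]; ring_nf
  have h3 : ∀ t, p u1 u2 t = exp (-(1 / 2) * (t ^ 2 / E3 + (u1 ^ 2 / E1 + u2 ^ 2 / E2))) :=
    fun t => by rw [hp]; ring_nf
  rw [((hasDerivAt_gaussian_slice h1 u1).const_mul _).deriv,
    deriv_affine_mul_gaussian_slice h2, deriv_affine_mul_gaussian_slice h3,
    iteratedDeriv_two_gaussian_slice h2, iteratedDeriv_two_gaussian_slice h3,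
    sq_eq_two_mul_mul_of_eq_sq_div hE2 hE2ne, sq_eq_two_mul_mul_of_eq_sq_div hE3 hE3ne]
  field_simp
  field_simp at hbalance
  linear_combination (-(u1 * u2 * u3 * p u1 u2 u3)) * hbalance

/-- **The triad model has a Gaussian invariant measure.**
With `A₁ + A₂ + A₃ = 0`, `E₂ = σ₂²/(2d₂)`, `E₃ = σ₃²/(2d₃)` and
`E₁ = −A₁E₂E₃/(A₂E₃ + A₃E₂) > 0`, the Gaussian function
`p = exp(−½(u₁²/E₁ + u₂²/E₂ + u₃²/E₃))` solves the stationary Fokker–Planck equation of the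
triad system at every point. -/
theorem triad_gaussian_invariant_measure
    (A1 A2 A3 d2 d3 σ2 σ3 E1 E2 E3 : ℝ)
    (hsum : A1 + A2 + A3 = 0)
    (hd2 : 0 < d2) (hd3 : 0 < d3) (hσ2 : 0 < σ2) (hσ3 : 0 < σ3)
    (hE2 : E2 = σ2 ^ 2 / (2 * d2)) (hE3 : E3 = σ3 ^ 2 / (2 * d3))
    (hden : A2 * E3 + A3 * E2 ≠ 0)
    (hE1 : E1 = -A1 * E2 * E3 / (A2 * E3 + A3 * E2)) (hE1pos : 0 < E1)
    (p : ℝ → ℝ → ℝ → ℝ)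
    (hp : ∀ u1 u2 u3, p u1 u2 u3 =
      Real.exp (-(1 / 2) * (u1 ^ 2 / E1 + u2 ^ 2 / E2 + u3 ^ 2 / E3))) :
    ∀ u1 u2 u3 : ℝ,
      deriv (fun t => A1 * u2 * u3 * p t u2 u3) u1
      + deriv (fun t => (A2 * u3 * u1 - d2 * t) * p u1 t u3) u2
      + deriv (fun t => (A3 * u1 * u2 - d3 * t) * p u1 u2 t) u3
      = σ2 ^ 2 / 2 * iteratedDeriv 2 (fun t => p u1 t u3) u2
      + σ3 ^ 2 / 2 * iteratedDeriv 2 (fun t => p u1 u2 t) u3 :=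
  triad_gaussian_invariant_measure_general A1 A2 A3 d2 d3 σ2 σ3 E1 E2 E3 hE2 hE3 hE1 hE1pos p hp
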